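/- Theorem 1(i): Let δ be an edge state on ℂᵐ⊗ℂⁿ, i.e. δ is positive semidefinite, its partial transpose δ^{T_B} is positive semidefinite, and δ strongly violates the range criterion (no nonzero product vector a⊗b lies in the range of δ while a⊗b̄ lies in the range of δ^{T_B}). Then for every ε > 0 and every pair of nonzero vectors a ∈ ℂᵐ, b ∈ ℂⁿ, the matrix δ − ε·(a⊗b)(a⊗b)† fails to be positive semidefinite or its partial transpose fails to be positive semidefinite. -/

import Mathlib

/-!
If `δ - ε (a⊗b)(a⊗b)†` were positive semidefinite for some `ε > 0`, every kernel vector `k` of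
`δ` would satisfy `0 ≤ k†(δ - ε (a⊗b)(a⊗b)†)k = -ε |⟨a⊗b, k⟩|²`, so `a⊗b ⟂ ker δ`, i.e.
`a⊗b ∈ range δ`, because `δ` (a positive semidefinite matrix plus `ε (a⊗b)(a⊗b)†`) is Hermitian.
The partial transpose of `(a⊗b)(a⊗b)†` is `(a⊗b̄)(a⊗b̄)†`, so if the partial transpose of the
difference were positive semidefinite too, the same argument would put `a⊗b̄` in the range of
`δ^{T_B}`, contradicting the edge property.
-/

open Matrix ComplexOrder

variable {m n : ℕ}

/-- The partial transpose on the second factor: `(ρ^{T_B})_{(i,j),(k,l)} = ρ_{(i,l),(k,j)}`. -/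
noncomputable def ptrans (ρ : Matrix (Fin m × Fin n) (Fin m × Fin n) ℂ) :
    Matrix (Fin m × Fin n) (Fin m × Fin n) ℂ :=
  fun p q => ρ (p.1, q.2) (q.1, p.2)

/-- The product vector `a ⊗ b ∈ ℂᵐ ⊗ ℂⁿ`, with `(i,j)`-th component `a i * b j`. -/
def prodVec (a : Fin m → ℂ) (b : Fin n → ℂ) : Fin m × Fin n → ℂ := fun p => a p.1 * b p.2

section RangeCriterion

variable {𝕜 N : Type*} [RCLike 𝕜] [Fintype N]

theorem Matrix.dotProduct_eq_zero_of_posSemidef_sub_smul_vecMulVec {A : Matrix N N 𝕜}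
    {v : N → 𝕜} {c : ℝ} (hc : 0 < c)
    (hA : (A - (c : 𝕜) • vecMulVec v (star v)).PosSemidef) {k : N → 𝕜} (hk : A *ᵥ k = 0) :
    star k ⬝ᵥ v = 0 := by
  set z := star k ⬝ᵥ v
  have hform : star k ⬝ᵥ (A - (c : 𝕜) • vecMulVec v (star v)) *ᵥ k =
      ((-(c * ‖z‖ ^ 2) : ℝ) : 𝕜) := by
    have hvk : star v ⬝ᵥ k = star z := star_dotProduct v k
    rw [sub_mulVec, hk, smul_mulVec, vecMulVec_mulVec, hvk]
    simp only [zero_sub, dotProduct_neg, dotProduct_smul, op_smul_eq_mul, smul_eq_mul]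
    rw [RCLike.star_def, RCLike.mul_conj]
    push_cast
    ring
  have hnonneg := hA.dotProduct_mulVec_nonneg k
  rw [hform, RCLike.ofReal_nonneg] at hnonneg
  have hz : ‖z‖ ^ 2 ≤ 0 := by nlinarith
  simpa using hz

variable [DecidableEq N]

theorem Matrix.IsHermitian.mem_range_mulVecLin_iff {A : Matrix N N 𝕜} (hA : A.IsHermitian)
    (v : N → 𝕜) :
    v ∈ LinearMap.range A.mulVecLin ↔ ∀ k, A *ᵥ k = 0 → star k ⬝ᵥ v = 0 := by
  set T := toEuclideanLin A
  have hrange : T.range = T.kerᗮ := by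
    rw [← (isSymmetric_toEuclideanLin_iff.mpr hA).orthogonal_range,
      Submodule.orthogonal_orthogonal]
  have hmem : v ∈ LinearMap.range A.mulVecLin ↔ WithLp.toLp 2 v ∈ T.range := by
    constructor
    · rintro ⟨w, rfl⟩
      exact ⟨WithLp.toLp 2 w, toLpLin_toLp 2 2 A w⟩
    · rintro ⟨w, hw⟩
      exact ⟨w.ofLp, congrArg WithLp.ofLp hw⟩
  rw [hmem, hrange, Submodule.mem_orthogonal]
  constructor
  · intro h k hk
    have := h (WithLp.toLp 2 k) (by simpa [T, toLpLin_toLp] using hk)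
    simpa [EuclideanSpace.inner_eq_star_dotProduct, dotProduct_comm] using this
  · intro h k hk
    have := h k.ofLp (by simpa [T] using congrArg WithLp.ofLp hk)
    simpa [EuclideanSpace.inner_eq_star_dotProduct, dotProduct_comm] using this

theorem Matrix.mem_range_of_posSemidef_sub_smul_vecMulVec {A : Matrix N N 𝕜} {v : N → 𝕜}
    {c : ℝ} (hc : 0 < c) (hA : (A - (c : 𝕜) • vecMulVec v (star v)).PosSemidef) :
    v ∈ LinearMap.range A.mulVecLin := by
  have hPSD : ((c : 𝕜) • vecMulVec v (star v)).PosSemidef :=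
    (posSemidef_vecMulVec_self_star v).smul (RCLike.ofReal_nonneg.mpr hc.le)
  have hherm : A.IsHermitian := by
    simpa using hA.isHermitian.add hPSD.isHermitian
  exact (hherm.mem_range_mulVecLin_iff v).mpr fun k hk =>
    dotProduct_eq_zero_of_posSemidef_sub_smul_vecMulVec hc hA hk

end RangeCriterion

theorem prodVec_ne_zero {a : Fin m → ℂ} {b : Fin n → ℂ} (ha : a ≠ 0) (hb : b ≠ 0) :
    prodVec a b ≠ 0 := by
  obtain ⟨i, hi⟩ := Function.ne_iff.mp ha
  obtain ⟨j, hj⟩ := Function.ne_iff.mp hb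
  exact Function.ne_iff.mpr ⟨(i, j), mul_ne_zero hi hj⟩

theorem ptrans_sub (A B : Matrix (Fin m × Fin n) (Fin m × Fin n) ℂ) :
    ptrans (A - B) = ptrans A - ptrans B :=
  rfl

theorem ptrans_smul (c : ℂ) (A : Matrix (Fin m × Fin n) (Fin m × Fin n) ℂ) :
    ptrans (c • A) = c • ptrans A :=
  rfl

theorem ptrans_vecMulVec_prodVec (a : Fin m → ℂ) (b : Fin n → ℂ) :
    ptrans (vecMulVec (prodVec a b) (star (prodVec a b))) =
      vecMulVec (prodVec a (star b)) (star (prodVec a (star b))) := by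
  ext p q
  simp only [ptrans, vecMulVec_apply, prodVec, Pi.star_apply, star_mul', star_star]
  ring

theorem edge_state_subtraction_general (m n : ℕ)
    (δ : Matrix (Fin m × Fin n) (Fin m × Fin n) ℂ)
    (hedge : ∀ (a : Fin m → ℂ) (b : Fin n → ℂ), prodVec a b ≠ 0 →
      ¬ (prodVec a b ∈ LinearMap.range δ.mulVecLin ∧
          prodVec a (fun j => starRingEnd ℂ (b j)) ∈ LinearMap.range (ptrans δ).mulVecLin)) :
    ∀ ε : ℝ, 0 < ε → ∀ (a : Fin m → ℂ) (b : Fin n → ℂ), a ≠ 0 → b ≠ 0 →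
      ¬ (δ - (ε : ℂ) • Matrix.vecMulVec (prodVec a b)
            (fun q => starRingEnd ℂ (prodVec a b q))).PosSemidef ∨
      ¬ (ptrans (δ - (ε : ℂ) • Matrix.vecMulVec (prodVec a b)
            (fun q => starRingEnd ℂ (prodVec a b q)))).PosSemidef := by
  intro ε hε a b ha hb
  rw [← not_and_or]
  rintro ⟨hsub, hsub_ptrans⟩
  replace hsub_ptrans : (ptrans δ - (ε : ℂ) •
      vecMulVec (prodVec a (star b)) (star (prodVec a (star b)))).PosSemidef := by
    rwa [← ptrans_vecMulVec_prodVec, ← ptrans_smul, ← ptrans_sub]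
  exact hedge a b (prodVec_ne_zero ha hb)
    ⟨mem_range_of_posSemidef_sub_smul_vecMulVec hε hsub,
      mem_range_of_posSemidef_sub_smul_vecMulVec hε hsub_ptrans⟩

/-- Theorem 1(i): if `δ` is an edge state then subtracting any positive
multiple of a product state destroys positivity or PPT-ness. -/
theorem edge_state_subtraction (m n : ℕ)
    (δ : Matrix (Fin m × Fin n) (Fin m × Fin n) ℂ)
    (hpos : δ.PosSemidef) (hppt : (ptrans δ).PosSemidef)
    (hedge : ∀ (a : Fin m → ℂ) (b : Fin n → ℂ), prodVec a b ≠ 0 →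
      ¬ (prodVec a b ∈ LinearMap.range δ.mulVecLin ∧
          prodVec a (fun j => starRingEnd ℂ (b j)) ∈ LinearMap.range (ptrans δ).mulVecLin)) :
    ∀ ε : ℝ, 0 < ε → ∀ (a : Fin m → ℂ) (b : Fin n → ℂ), a ≠ 0 → b ≠ 0 →
      ¬ (δ - (ε : ℂ) • Matrix.vecMulVec (prodVec a b)
            (fun q => starRingEnd ℂ (prodVec a b q))).PosSemidef ∨
      ¬ (ptrans (δ - (ε : ℂ) • Matrix.vecMulVec (prodVec a b)
            (fun q => starRingEnd ℂ (prodVec a b q)))).PosSemidef :=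
  edge_state_subtraction_general m n δ hedge
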